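/- Let R ×_T S be a nontrivial fiber product ring with maximal ideal m. Suppose depth(T) = 0, grade(mR, R) > 0 and grade(mS, S) > 0. Then R ×_T S is Cohen-Macaulay if and only if R and S are Cohen-Macaulay local rings with dim(R) = dim(S) = dim(R ×_T S) = 1. -/

import Mathlib

/-!
Common definitions: Betti numbers, Poincaré series, grade, depth, embedding
dimension, fiber product rings, and large homomorphisms.
-/

open CategoryTheory

universe u

/-- The length of a module, defined as the Krull dimension of its submodule
lattice (for a module annihilated by the maximal ideal of a local ring `A`,
this is its dimension as a vector space over the residue field `k = A/m_A`). -/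
noncomputable def modLength (A : Type u) [CommRing A]
    (M : Type u) [AddCommGroup M] [Module A M] : ℕ :=
  ((Order.krullDim (Submodule A M)).unbotD 0).toNat

/-- The `i`-th Betti number `β_i^A(M) = dim_k Tor_i^A(M, k)` of a module `M`
over a local ring `A` with residue field `k`. -/
noncomputable def betti (A : Type u) [CommRing A] [IsLocalRing A]
    (M : Type u) [AddCommGroup M] [Module A M] (i : ℕ) : ℕ :=
  modLength A (((Tor (ModuleCat.{u} A) i).obj (ModuleCat.of A M)).obj
      (ModuleCat.of A (IsLocalRing.ResidueField A)))

/-- The Poincaré series `P^A_M(t) = Σ_{i≥0} β_i^A(M) tⁱ`, as a formal power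
series with rational coefficients. -/
noncomputable def poincare (A : Type u) [CommRing A] [IsLocalRing A]
    (M : Type u) [AddCommGroup M] [Module A M] : PowerSeries ℚ :=
  PowerSeries.mk fun i => (betti A M i : ℚ)

/-- `grade(I, M)`: the length of the longest `M`-regular sequence contained in
the ideal `I`. -/
noncomputable def mgrade (A : Type u) [CommRing A] (I : Ideal A)
    (M : Type u) [AddCommGroup M] [Module A M] : ℕ∞ :=
  sSup {n : ℕ∞ | ∃ rs : List A, (∀ r ∈ rs, r ∈ I) ∧
    RingTheory.Sequence.IsRegular M rs ∧ n = rs.length}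

/-- `depth(A) = grade(m_A, A)` for a local ring `A`. -/
noncomputable def rdepth (A : Type u) [CommRing A] [IsLocalRing A] : ℕ∞ :=
  mgrade A (IsLocalRing.maximalIdeal A) A

/-- The embedding dimension `edim(A) = dim_k (m_A / m_A²)`. -/
noncomputable def edim (A : Type u) [CommRing A] [IsLocalRing A] : ℕ :=
  Module.finrank (IsLocalRing.ResidueField A) (IsLocalRing.CotangentSpace A)

/-- `M` has finite projective dimension: it admits a projective resolution
which vanishes in all sufficiently large degrees. -/
def HasFiniteProjDim (A : Type u) [CommRing A]
    (M : Type u) [AddCommGroup M] [Module A M] : Prop :=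
  ∃ (P : CategoryTheory.ProjectiveResolution (ModuleCat.of A M)) (n : ℕ),
    ∀ i : ℕ, n < i → CategoryTheory.Limits.IsZero (P.complex.X i)

/-- The fiber product `R ×_T S = {(r, s) : π_R r = π_S s}` as a subring of `R × S`. -/
def fiberProd {R S T : Type u} [CommRing R] [CommRing S] [CommRing T]
    (πR : R →+* T) (πS : S →+* T) : Subring (R × S) :=
  RingHom.eqLocus (πR.comp (RingHom.fst R S)) (πS.comp (RingHom.snd R S))

/-- The first natural projection `η_R : R ×_T S → R`. -/
def etaR {R S T : Type u} [CommRing R] [CommRing S] [CommRing T]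
    (πR : R →+* T) (πS : S →+* T) : ↥(fiberProd πR πS) →+* R :=
  (RingHom.fst R S).comp (fiberProd πR πS).subtype

/-- The second natural projection `η_S : R ×_T S → S`. -/
def etaS {R S T : Type u} [CommRing R] [CommRing S] [CommRing T]
    (πR : R →+* T) (πS : S →+* T) : ↥(fiberProd πR πS) →+* S :=
  (RingHom.snd R S).comp (fiberProd πR πS).subtype

/-- The extension `mR` of the maximal ideal `m` of `R ×_T S` to `R` under `η_R`. -/
noncomputable def mExtR {R S T : Type u} [CommRing R] [CommRing S] [CommRing T]
    (πR : R →+* T) (πS : S →+* T) [IsLocalRing ↥(fiberProd πR πS)] : Ideal R :=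
  Ideal.map (etaR πR πS) (IsLocalRing.maximalIdeal ↥(fiberProd πR πS))

/-- The extension `mS` of the maximal ideal `m` of `R ×_T S` to `S` under `η_S`. -/
noncomputable def mExtS {R S T : Type u} [CommRing R] [CommRing S] [CommRing T]
    (πR : R →+* T) (πS : S →+* T) [IsLocalRing ↥(fiberProd πR πS)] : Ideal S :=
  Ideal.map (etaS πR πS) (IsLocalRing.maximalIdeal ↥(fiberProd πR πS))

/-- The extension `mT` of the maximal ideal `m` of `R ×_T S` to `T` under the
natural surjection `π_R ∘ η_R`. -/
noncomputable def mExtT {R S T : Type u} [CommRing R] [CommRing S] [CommRing T]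
    (πR : R →+* T) (πS : S →+* T) [IsLocalRing ↥(fiberProd πR πS)] : Ideal T :=
  Ideal.map (πR.comp (etaR πR πS)) (IsLocalRing.maximalIdeal ↥(fiberProd πR πS))

/-- A ring homomorphism `f : A → B` between local rings is *large* if
`P^A_N(t) = P^B_N(t) · P^A_B(t)` for every finitely generated nonzero
`B`-module `N`, viewed as an `A`-module via `f`. -/
def IsLargeHom {A B : Type u} [CommRing A] [IsLocalRing A] [CommRing B] [IsLocalRing B]
    (f : A →+* B) : Prop :=
  ∀ (N : Type u) [AddCommGroup N] [Module B N], Module.Finite B N → Nontrivial N →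
    letI : Module A N := Module.compHom N f
    letI : Module A B := Module.compHom B f
    poincare A N = poincare B N * poincare A B

/-!
Since `depth T = 0`, some `t ≠ 0` in `T` is killed by `m_T`; lift it to `r ∈ R`. By prime
avoidance over the fiber product `P`, the positive grades of `mR = m_R` and `mS = m_S` give one
`x ∈ m_P` whose components are regular on `R` and on `S`. Then `u = (x₁ r, 0) ∈ P` satisfies
`m_P u ⊆ xP` but `u ∉ xP`, so `m_P` consists of zero divisors on `P/xP` and `depth P = 1`.
Hence `P` is Cohen–Macaulay iff `dim P = 1`; in that case `1 ≤ depth R ≤ dim R ≤ dim P = 1`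
(and likewise for `S`), because the length of a regular sequence is bounded by the dimension.
-/

open IsLocalRing RingTheory.Sequence

section Regular

variable {A : Type*} [CommRing A]

theorem exists_mem_isSMulRegular_of_forall_smul_eq_zero {M : Type*} [IsNoetherianRing A]
    [AddCommGroup M] [Module A M] [Module.Finite A M] {I : Ideal A}
    (h : ∀ m : M, (∀ r ∈ I, r • m = 0) → m = 0) : ∃ r ∈ I, IsSMulRegular M r := by
  rw [← Ideal.annihilator_quotient (I := I), ← IsSMulRegular.subsingleton_linearMap_iff]
  suffices ∀ f : A ⧸ I →ₗ[A] M, f = 0 from ⟨fun f g => (this f).trans (this g).symm⟩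
  refine fun f => Submodule.linearMap_qext _ (LinearMap.ext_ring (h _ fun r hr => ?_))
  rw [LinearMap.comp_apply, ← map_smul, Submodule.mkQ_apply, ← Submodule.Quotient.mk_smul,
    smul_eq_mul, mul_one, (Submodule.Quotient.mk_eq_zero I).mpr hr, map_zero]

theorem dvd_of_isSMulRegular_quotSMulTop {a b w : A} (hb : IsSMulRegular (QuotSMulTop a A) b)
    (h : a ∣ b * w) : a ∣ w := by
  obtain ⟨c, hc⟩ := h
  have hw : (Submodule.Quotient.mk w : QuotSMulTop a A) = 0 := hb <| by
    show b • _ = b • 0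
    rw [smul_zero, ← Submodule.Quotient.mk_smul, smul_eq_mul, hc, Submodule.Quotient.mk_eq_zero]
    exact Submodule.smul_mem_pointwise_smul c a ⊤ trivial
  obtain ⟨d, -, hd⟩ := (Submodule.mem_smul_pointwise_iff_exists _ _ _).mp
    ((Submodule.Quotient.mk_eq_zero _).mp hw)
  exact ⟨d, hd.symm⟩

theorem Subring.isSMulRegular_of_isLeftRegular_coe {B : Type*} [Ring B] {P : Subring B} {x : P}
    (hx : IsLeftRegular (x : B)) : IsSMulRegular P x :=
  fun _ _ h => Subtype.ext (hx (congrArg Subtype.val h))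

end Regular

section Grade

theorem exists_mem_isSMulRegular_of_pos_mgrade {A M : Type u} [CommRing A] [AddCommGroup M]
    [Module A M] {I : Ideal A} (h : 0 < mgrade A I M) : ∃ r ∈ I, IsSMulRegular M r := by
  obtain ⟨_, ⟨rs, hrs, hreg, rfl⟩, hpos⟩ := lt_sSup_iff.mp h
  cases rs with
  | nil => simp at hpos
  | cons r rs => exact ⟨r, hrs r List.mem_cons_self, ((isRegular_cons_iff M r rs).mp hreg).1⟩

theorem one_le_mgrade {A : Type u} [CommRing A] {I : Ideal A} (hI : I ≠ ⊤) {r : A} (hr : r ∈ I)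
    (hreg : IsSMulRegular A r) : 1 ≤ mgrade A I A := by
  refine le_sSup ⟨[r], by simpa using hr, ⟨?_, ?_⟩, by simp⟩
  · exact (isWeaklyRegular_singleton_iff A r).mpr hreg
  · simpa [smul_eq_mul, Ideal.mul_top, eq_comm (a := ⊤), Ideal.span_singleton_eq_top] using
      fun hu : IsUnit r => hI (Ideal.eq_top_of_isUnit_mem I hr hu)

theorem mgrade_le_one {A M : Type u} [CommRing A] [AddCommGroup M] [Module A M] {I : Ideal A}
    (h : ∀ a ∈ I, ∀ b ∈ I, IsSMulRegular M a → ¬ IsSMulRegular (QuotSMulTop a M) b) :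
    mgrade A I M ≤ 1 := by
  refine sSup_le ?_
  rintro _ ⟨rs, hrs, hreg, rfl⟩
  match rs, hrs, hreg with
  | [], _, _ => simp
  | [_], _, _ => simp
  | a :: b :: rs, hrs, hreg =>
    obtain ⟨ha, hreg⟩ := (isRegular_cons_iff M a (b :: rs)).mp hreg
    exact (h a (hrs a (by simp)) b (hrs b (by simp)) ha
      ((isRegular_cons_iff _ b rs).mp hreg).1).elim

theorem mgrade_le_one_of_dvd_mul {A : Type u} [CommRing A] {I : Ideal A} {x u : A}
    (hx : IsSMulRegular A x) (hu : ¬ x ∣ u) (hIu : ∀ a ∈ I, x ∣ a * u) : mgrade A I A ≤ 1 := by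
  refine mgrade_le_one fun a ha b hb hareg hbreg => hu ?_
  obtain ⟨w, hw⟩ := hIu a ha
  obtain ⟨w', hw'⟩ := hIu b hb
  have hww' : a * w' = b * w := hx (show x * (a * w') = x * (b * w) by
    linear_combination b * hw - a * hw')
  obtain ⟨c, rfl⟩ := dvd_of_isSMulRegular_quotSMulTop hbreg ⟨w', hww'.symm⟩
  exact ⟨c, hareg (show a * u = a * (x * c) by linear_combination hw)⟩

theorem mgrade_le_ringKrullDim {A : Type u} [CommRing A] [IsNoetherianRing A] [IsLocalRing A]
    (I : Ideal A) : (mgrade A I A : WithBot ℕ∞) ≤ ringKrullDim A := by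
  obtain ⟨n, hn⟩ := WithBot.ne_bot_iff_exists.mp
    (ne_bot_of_le_ne_bot WithBot.coe_ne_bot (ringKrullDim_nonneg_of_nontrivial (R := A)))
  rw [← hn, WithBot.coe_le_coe]
  refine sSup_le ?_
  rintro _ ⟨rs, -, hreg, rfl⟩
  have : Nontrivial (A ⧸ Ideal.ofList rs) := Ideal.Quotient.nontrivial_iff.mpr (by
    simpa [smul_eq_mul, Ideal.mul_top] using hreg.2.symm)
  rw [← WithBot.coe_le_coe, hn, ← ringKrullDim_add_length_eq_ringKrullDim_of_isRegular rs hreg]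
  exact_mod_cast le_add_of_nonneg_left ringKrullDim_nonneg_of_nontrivial

theorem exists_ne_zero_forall_mem_maximalIdeal_mul_eq_zero {A : Type u} [CommRing A]
    [IsNoetherianRing A] [IsLocalRing A] (h : rdepth A = 0) :
    ∃ t : A, t ≠ 0 ∧ ∀ w ∈ maximalIdeal A, w * t = 0 := by
  by_contra! hA
  obtain ⟨r, hr, hreg⟩ := exists_mem_isSMulRegular_of_forall_smul_eq_zero (M := A)
    (I := maximalIdeal A) fun t ht => by_contra fun h0 =>
      let ⟨w, hw, hwt⟩ := hA t h0; hwt (ht w hw)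
  have := one_le_mgrade (maximalIdeal.isMaximal A).ne_top hr hreg
  rw [← rdepth, h] at this
  exact absurd this (by norm_num)

theorem rdepth_eq_one_of_ringKrullDim_le_one {A : Type u} [CommRing A] [IsNoetherianRing A]
    [IsLocalRing A] (hpos : 0 < rdepth A) (hdim : ringKrullDim A ≤ 1) :
    ((rdepth A : ℕ∞) : WithBot ℕ∞) = 1 ∧ ringKrullDim A = 1 := by
  have hone : (1 : WithBot ℕ∞) ≤ rdepth A := by exact_mod_cast Order.one_le_iff_pos.mpr hpos
  have hle := mgrade_le_ringKrullDim (maximalIdeal A)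
  exact ⟨le_antisymm (hle.trans hdim) hone, le_antisymm hdim (hone.trans hle)⟩

end Grade

section FiberProduct

variable {R S T : Type u} [CommRing R] [CommRing S] [CommRing T] {πR : R →+* T} {πS : S →+* T}

theorem etaR_surjective (hπS : Function.Surjective πS) : Function.Surjective (etaR πR πS) :=
  fun r => let ⟨s, hs⟩ := hπS (πR r); ⟨⟨(r, s), hs.symm⟩, rfl⟩

theorem etaS_surjective (hπR : Function.Surjective πR) : Function.Surjective (etaS πR πS) :=
  fun s => let ⟨r, hr⟩ := hπR (πS s); ⟨⟨(r, s), hr⟩, rfl⟩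

theorem finite_prod_fiberProd (hπR : Function.Surjective πR) (hπS : Function.Surjective πS) :
    Module.Finite (fiberProd πR πS) (R × S) := by
  have hspan : Submodule.span (fiberProd πR πS) {((1 : R), (0 : S)), (0, 1)} = ⊤ := by
    refine eq_top_iff.mpr fun ⟨r, s⟩ _ => Submodule.mem_span_pair.mpr ?_
    obtain ⟨s', hs'⟩ := hπS (πR r)
    obtain ⟨r', hr'⟩ := hπR (πS s)
    exact ⟨⟨(r, s'), hs'.symm⟩, ⟨(r', s), hr'⟩, by ext <;> simp [Subring.smul_def]⟩
  rw [Module.finite_def, ← hspan]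
  exact Submodule.fg_span (Set.toFinite _)

variable [IsLocalRing (fiberProd πR πS)]

theorem mem_maximalIdeal_fiberProd_iff_fst [IsLocalRing R] (hπS : Function.Surjective πS)
    (z : fiberProd πR πS) :
    z ∈ maximalIdeal (fiberProd πR πS) ↔ (z : R × S).1 ∈ maximalIdeal R := by
  have := IsLocalHom.of_surjective (etaR πR πS) (etaR_surjective hπS)
  rw [← maximalIdeal_comap (etaR πR πS), Ideal.mem_comap]
  exact Iff.rfl

theorem mem_maximalIdeal_fiberProd_iff_snd [IsLocalRing S] (hπR : Function.Surjective πR)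
    (z : fiberProd πR πS) :
    z ∈ maximalIdeal (fiberProd πR πS) ↔ (z : R × S).2 ∈ maximalIdeal S := by
  have := IsLocalHom.of_surjective (etaS πR πS) (etaS_surjective hπR)
  rw [← maximalIdeal_comap (etaS πR πS), Ideal.mem_comap]
  exact Iff.rfl

theorem mExtR_eq_maximalIdeal [IsLocalRing R] (hπS : Function.Surjective πS) :
    mExtR πR πS = maximalIdeal R :=
  map_maximalIdeal_of_surjective _ (etaR_surjective hπS)

theorem mExtS_eq_maximalIdeal [IsLocalRing S] (hπR : Function.Surjective πR) :
    mExtS πR πS = maximalIdeal S :=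
  map_maximalIdeal_of_surjective _ (etaS_surjective hπR)

theorem exists_mem_maximalIdeal_fiberProd_isLeftRegular [IsNoetherianRing (fiberProd πR πS)]
    [IsLocalRing R] [IsLocalRing S] (hπR : Function.Surjective πR) (hπS : Function.Surjective πS)
    {r : R} (hr : r ∈ maximalIdeal R) (hrreg : IsSMulRegular R r)
    {s : S} (hs : s ∈ maximalIdeal S) (hsreg : IsSMulRegular S s) :
    ∃ x ∈ maximalIdeal (fiberProd πR πS), IsLeftRegular (x : R × S) := by
  have := finite_prod_fiberProd hπR hπS
  refine exists_mem_isSMulRegular_of_forall_smul_eq_zero fun m hm => ?_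
  obtain ⟨s', hs'⟩ := hπS (πR r)
  obtain ⟨r', hr'⟩ := hπR (πS s)
  have h₁ := congrArg Prod.fst
    (hm ⟨(r, s'), hs'.symm⟩ ((mem_maximalIdeal_fiberProd_iff_fst hπS _).mpr hr))
  have h₂ := congrArg Prod.snd
    (hm ⟨(r', s), hr'⟩ ((mem_maximalIdeal_fiberProd_iff_snd hπR _).mpr hs))
  exact Prod.ext (hrreg.right_eq_zero_of_smul h₁) (hsreg.right_eq_zero_of_smul h₂)

theorem rdepth_fiberProd_le_one [IsLocalRing R] [IsLocalRing T] (hπR : Function.Surjective πR)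
    (hπS : Function.Surjective πS) {x : fiberProd πR πS} (hx : x ∈ maximalIdeal _)
    (hxreg : IsLeftRegular (x : R × S)) {t : T} (ht : t ≠ 0)
    (htm : ∀ w ∈ maximalIdeal T, w * t = 0) : rdepth (fiberProd πR πS) ≤ 1 := by
  have := IsLocalHom.of_surjective πR hπR
  obtain ⟨r, rfl⟩ := hπR t
  have hmem : ∀ a ∈ maximalIdeal (fiberProd πR πS),
      ((a : R × S).1 * r, (0 : S)) ∈ fiberProd πR πS := by
    intro a ha
    have : πR (a : R × S).1 ∈ maximalIdeal T := by
      rw [← Ideal.mem_comap, maximalIdeal_comap]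
      exact (mem_maximalIdeal_fiberProd_iff_fst hπS a).mp ha
    show πR ((a : R × S).1 * r) = πS 0
    rw [map_mul, map_zero, htm _ this]
  obtain ⟨hx₁, hx₂⟩ := Prod.isLeftRegular_mk.mp hxreg
  refine mgrade_le_one_of_dvd_mul (u := ⟨_, hmem x hx⟩)
    (Subring.isSMulRegular_of_isLeftRegular_coe hxreg) ?_
    fun a ha => ⟨⟨_, hmem a ha⟩, Subtype.ext (Prod.ext ?_ ?_)⟩
  · rintro ⟨c, hc⟩
    have hc₁ : (c : R × S).1 = r := hx₁ (by simpa using congrArg (·.1.1) hc.symm)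
    have hc₂ : (c : R × S).2 = 0 := hx₂ (by simpa using congrArg (·.1.2) hc.symm)
    have hc := c.2
    change πR (c : R × S).1 = πS (c : R × S).2 at hc
    rw [hc₁, hc₂, map_zero] at hc
    exact ht hc
  · simp only [Subring.coe_mul, Prod.fst_mul]
    ring
  · simp

theorem rdepth_fiberProd_eq_one [IsNoetherianRing T] [IsNoetherianRing (fiberProd πR πS)]
    [IsLocalRing R] [IsLocalRing S] [IsLocalRing T] (hπR : Function.Surjective πR)
    (hπS : Function.Surjective πS) (hdT : rdepth T = 0) (hR : 0 < rdepth R)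
    (hS : 0 < rdepth S) : rdepth (fiberProd πR πS) = 1 := by
  obtain ⟨r, hr, hrreg⟩ := exists_mem_isSMulRegular_of_pos_mgrade hR
  obtain ⟨s, hs, hsreg⟩ := exists_mem_isSMulRegular_of_pos_mgrade hS
  obtain ⟨x, hx, hxreg⟩ :=
    exists_mem_maximalIdeal_fiberProd_isLeftRegular hπR hπS hr hrreg hs hsreg
  obtain ⟨t, ht, htm⟩ := exists_ne_zero_forall_mem_maximalIdeal_mul_eq_zero hdT
  exact le_antisymm (rdepth_fiberProd_le_one hπR hπS hx hxreg ht htm)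
    (one_le_mgrade (maximalIdeal.isMaximal _).ne_top hx
      (Subring.isSMulRegular_of_isLeftRegular_coe hxreg))

end FiberProduct

theorem statement_17_general
    {R S T : Type u} [CommRing R] [CommRing S] [CommRing T]
    [IsNoetherianRing R] [IsNoetherianRing S] [IsNoetherianRing T]
    [IsLocalRing R] [IsLocalRing S] [IsLocalRing T]
    (πR : R →+* T) (πS : S →+* T)
    (hπR : Function.Surjective πR) (hπS : Function.Surjective πS)
    [IsNoetherianRing ↥(fiberProd πR πS)] [IsLocalRing ↥(fiberProd πR πS)]
    (hdT : rdepth T = 0)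
    (hgR : 0 < mgrade R (mExtR πR πS) R)
    (hgS : 0 < mgrade S (mExtS πR πS) S) :
    ((rdepth (↥(fiberProd πR πS)) : WithBot ℕ∞) = ringKrullDim (↥(fiberProd πR πS))) ↔
      (((rdepth R : ℕ∞) : WithBot ℕ∞) = ringKrullDim R ∧
        ((rdepth S : ℕ∞) : WithBot ℕ∞) = ringKrullDim S ∧
        ringKrullDim R = 1 ∧ ringKrullDim S = 1 ∧
        ringKrullDim (↥(fiberProd πR πS)) = 1) := by
  rw [mExtR_eq_maximalIdeal hπS, ← rdepth] at hgR
  rw [mExtS_eq_maximalIdeal hπR, ← rdepth] at hgS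
  rw [rdepth_fiberProd_eq_one hπR hπS hdT hgR hgS, WithBot.coe_one, eq_comm]
  refine ⟨fun hP => ?_, fun h => h.2.2.2.2⟩
  obtain ⟨hdR, hR1⟩ := rdepth_eq_one_of_ringKrullDim_le_one hgR
    (hP ▸ ringKrullDim_le_of_surjective _ (etaR_surjective hπS))
  obtain ⟨hdS, hS1⟩ := rdepth_eq_one_of_ringKrullDim_le_one hgS
    (hP ▸ ringKrullDim_le_of_surjective _ (etaS_surjective hπR))
  exact ⟨hdR.trans hR1.symm, hdS.trans hS1.symm, hR1, hS1, hP⟩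

theorem statement_17
    {R S T : Type u} [CommRing R] [CommRing S] [CommRing T]
    [IsNoetherianRing R] [IsNoetherianRing S] [IsNoetherianRing T]
    [IsLocalRing R] [IsLocalRing S] [IsLocalRing T]
    (πR : R →+* T) (πS : S →+* T)
    (hπR : Function.Surjective πR) (hπS : Function.Surjective πS)
    (hkR : RingHom.ker πR ≠ ⊥) (hkS : RingHom.ker πS ≠ ⊥)
    [IsNoetherianRing ↥(fiberProd πR πS)] [IsLocalRing ↥(fiberProd πR πS)]
    (hdT : rdepth T = 0)
    (hgR : 0 < mgrade R (mExtR πR πS) R)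
    (hgS : 0 < mgrade S (mExtS πR πS) S) :
    ((rdepth (↥(fiberProd πR πS)) : WithBot ℕ∞) = ringKrullDim (↥(fiberProd πR πS))) ↔
      (((rdepth R : ℕ∞) : WithBot ℕ∞) = ringKrullDim R ∧
        ((rdepth S : ℕ∞) : WithBot ℕ∞) = ringKrullDim S ∧
        ringKrullDim R = 1 ∧ ringKrullDim S = 1 ∧
        ringKrullDim (↥(fiberProd πR πS)) = 1) :=
  statement_17_general πR πS hπR hπS hdT hgR hgS
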